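/- arXiv:2504.21378 — 2 statements merged into one kernel-verified Lean document; each statement's English description precedes it below -/
import Mathlib

section
/- Let G = (V,E) be a finite connected undirected graph with conductances {c_e}_{e∈E} ⊂ [0,∞), let x,y ∈ V be distinct, and let g be the unit electric flow from x to y in (G,{c_e}). Suppose w, w₁, w₂ ∈ V are three distinct vertices with g_{w₁w} > 0 and g_{w₂w} > 0. Let c_Δ > 0 and define new conductances c'_e = c_{w₂w} + c_Δ for e = ⟨w₂,w⟩ and c'_e = c_e for every other edge e ∈ E. If g' denotes the unit electric flow from x to y in (G,{c'_e}), then g'_{w₁w} ≤ g_{w₁w}. -/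
noncomputable section

/-- A finite electric network: symmetric, nonnegative, loopless conductances on a
finite vertex set (an edge with conductance `0` is regarded as absent). -/
structure ElecNetwork (V : Type) [Fintype V] where
  c : V → V → ℝ
  symm : ∀ u v, c u v = c v u
  nonneg : ∀ u v, 0 ≤ c u v
  loopless : ∀ v, c v v = 0

variable {V : Type} [Fintype V] [DecidableEq V]

/-- `f` is a flow on the network `N`: antisymmetric and supported on the edges. -/
def ElecNetwork.IsFlow (N : ElecNetwork V) (f : V → V → ℝ) : Prop :=
  (∀ u v, f u v = - f v u) ∧ ∀ u v, N.c u v = 0 → f u v = 0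

/-- The net flow of `f` out of a vertex `u`. -/
def netFlowOut [Fintype V] (f : V → V → ℝ) (u : V) : ℝ := ∑ v, f u v

/-- `f` is a unit flow from `x` to `y` on the network `N`. -/
def ElecNetwork.IsUnitFlow (N : ElecNetwork V) (x y : V) (f : V → V → ℝ) : Prop :=
  N.IsFlow f ∧ netFlowOut f x = 1 ∧ netFlowOut f y = -1 ∧
    ∀ u, u ≠ x → u ≠ y → netFlowOut f u = 0

/-- The energy `(1/2) ∑_{⟨u,v⟩} f_{uv}² / c_{uv}` of a flow on the network `N`. -/
def ElecNetwork.energy (N : ElecNetwork V) (f : V → V → ℝ) : ℝ :=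
  (1 / 2) * ∑ u, ∑ v, if N.c u v = 0 then 0 else f u v ^ 2 / N.c u v

/-- `g` is the unit electric flow from `x` to `y` on `N`: a unit flow attaining the
infimum of the energy among all unit flows from `x` to `y`. -/
def ElecNetwork.IsElecFlow (N : ElecNetwork V) (x y : V) (g : V → V → ℝ) : Prop :=
  N.IsUnitFlow x y g ∧ ∀ f, N.IsUnitFlow x y f → N.energy g ≤ N.energy f

/-- The network obtained from `N` by adding `t ≥ 0` to the conductance of the
(undirected) edge `⟨a,b⟩`, for `a ≠ b`. -/
def ElecNetwork.addCond (N : ElecNetwork V) (a b : V) (hab : a ≠ b) (t : ℝ)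
    (ht : 0 ≤ t) : ElecNetwork V where
  c u v := N.c u v + if (u = a ∧ v = b) ∨ (u = b ∧ v = a) then t else 0
  symm u v := by
    try dsimp only
    have h : ((u = a ∧ v = b) ∨ (u = b ∧ v = a)) ↔
        ((v = a ∧ u = b) ∨ (v = b ∧ u = a)) := by tauto
    rw [N.symm u v, if_congr h rfl rfl]
  nonneg u v := by
    try dsimp only
    have h1 := N.nonneg u v
    split <;> linarith
  loopless v := by
    try dsimp only
    have h : ¬((v = a ∧ v = b) ∨ (v = b ∧ v = a)) := by
      rintro (⟨h1, h2⟩ | ⟨h1, h2⟩)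
      · exact hab (h1.symm.trans h2)
      · exact hab (h2.symm.trans h1)
    rw [if_neg h, N.loopless v, add_zero]

-- ==== auxiliary development ====

/-- The flow induced by a potential. -/
def potFlow (N : ElecNetwork V) (φ : V → ℝ) : V → V → ℝ :=
  fun u v => N.c u v * (φ u - φ v)

lemma potFlow_isFlow (N : ElecNetwork V) (φ : V → ℝ) : N.IsFlow (potFlow N φ) := by
  constructor
  · intro u v; simp only [potFlow]; rw [N.symm u v]; ring
  · intro u v h; simp [potFlow, h]

lemma sum_sum_antisym (F : V → V → ℝ) (h : ∀ u v, F u v = - F v u) :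
    ∑ u, ∑ v, F u v = 0 := by
  have h1 : ∑ u, ∑ v, F u v = ∑ v, ∑ u, F u v := Finset.sum_comm
  have h2 : ∑ v : V, ∑ u : V, F u v = - ∑ v : V, ∑ u : V, F v u := by
    rw [← Finset.sum_neg_distrib]
    refine Finset.sum_congr rfl fun v _ => ?_
    rw [← Finset.sum_neg_distrib]
    exact Finset.sum_congr rfl fun u _ => h u v
  have h3 : ∑ v : V, ∑ u : V, F v u = ∑ u : V, ∑ v : V, F u v := rfl
  linarith [h1, h2, h3]

lemma sum_mul_sub (f : V → V → ℝ) (hf : ∀ u v, f u v = - f v u) (φ : V → ℝ) :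
    ∑ u, ∑ v, f u v * (φ u - φ v) = 2 * ∑ u, netFlowOut f u * φ u := by
  have key : ∀ u v : V, f u v * (φ u - φ v) = f u v * φ u + f v u * φ v := by
    intro u v
    have := hf v u
    rw [this]; ring
  calc ∑ u, ∑ v, f u v * (φ u - φ v)
      = ∑ u, ∑ v, (f u v * φ u + f v u * φ v) := by
        refine Finset.sum_congr rfl fun u _ => Finset.sum_congr rfl fun v _ => key u v
    _ = (∑ u, ∑ v, f u v * φ u) + ∑ u, ∑ v, f v u * φ v := by
        rw [← Finset.sum_add_distrib]
        refine Finset.sum_congr rfl fun u _ => ?_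
        rw [← Finset.sum_add_distrib]
    _ = (∑ u, netFlowOut f u * φ u) + ∑ v, netFlowOut f v * φ v := by
        congr 1
        · refine Finset.sum_congr rfl fun u _ => ?_
          rw [netFlowOut, Finset.sum_mul]
        · rw [Finset.sum_comm]
          refine Finset.sum_congr rfl fun v _ => ?_
          rw [netFlowOut, Finset.sum_mul]
    _ = 2 * ∑ u, netFlowOut f u * φ u := by ring

/-- Energy decomposition against a potential flow with the same divergence. -/
lemma energy_decomp (N : ElecNetwork V) (φ : V → ℝ) (f : V → V → ℝ)
    (hf : N.IsFlow f) (hnet : ∀ u, netFlowOut f u = netFlowOut (potFlow N φ) u) :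
    N.energy f = N.energy (potFlow N φ)
      + N.energy (fun u v => f u v - potFlow N φ u v) := by
  have key : ∀ u v : V, (if N.c u v = 0 then 0 else f u v ^ 2 / N.c u v)
      = (if N.c u v = 0 then 0 else (potFlow N φ) u v ^ 2 / N.c u v)
      + (if N.c u v = 0 then 0 else (f u v - potFlow N φ u v) ^ 2 / N.c u v)
      + 2 * ((f u v - potFlow N φ u v) * (φ u - φ v)) := by
    intro u v
    by_cases h : N.c u v = 0
    · simp [h, hf.2 u v h, potFlow]
    · simp only [if_neg h, potFlow]
      field_simp
      ring
  have hanti : ∀ u v : V, (f u v - potFlow N φ u v) = - (f v u - potFlow N φ v u) := by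
    intro u v
    rw [hf.1 u v, (potFlow_isFlow N φ).1 u v]; ring
  have hnetd : ∀ u : V, netFlowOut (fun a b => f a b - potFlow N φ a b) u = 0 := by
    intro u
    simp only [netFlowOut, Finset.sum_sub_distrib]
    rw [← netFlowOut, ← netFlowOut, hnet u, sub_self]
  have hsum : ∑ u, ∑ v, (f u v - potFlow N φ u v) * (φ u - φ v) = 0 := by
    rw [sum_mul_sub _ hanti φ]
    simp only [hnetd, zero_mul, Finset.sum_const_zero, mul_zero]
  unfold ElecNetwork.energy
  have expand : ∑ u, ∑ v, (if N.c u v = 0 then 0 else f u v ^ 2 / N.c u v)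
      = (∑ u, ∑ v, (if N.c u v = 0 then 0 else (potFlow N φ) u v ^ 2 / N.c u v))
      + (∑ u, ∑ v, (if N.c u v = 0 then 0 else (f u v - potFlow N φ u v) ^ 2 / N.c u v))
      + ∑ u, ∑ v, 2 * ((f u v - potFlow N φ u v) * (φ u - φ v)) := by
    rw [← Finset.sum_add_distrib, ← Finset.sum_add_distrib]
    refine Finset.sum_congr rfl fun u _ => ?_
    rw [← Finset.sum_add_distrib, ← Finset.sum_add_distrib]
    exact Finset.sum_congr rfl fun v _ => key u v
  have hC : (∑ u, ∑ v, 2 * ((f u v - potFlow N φ u v) * (φ u - φ v))) = 0 := by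
    have h2 : ∀ u : V, ∑ v, 2 * ((f u v - potFlow N φ u v) * (φ u - φ v))
        = 2 * ∑ v, (f u v - potFlow N φ u v) * (φ u - φ v) :=
      fun u => (Finset.mul_sum _ _ _).symm
    rw [Finset.sum_congr rfl fun u _ => h2 u, ← Finset.mul_sum, hsum, mul_zero]
  rw [expand, hC]
  ring

lemma energy_zero_of_nonpos (N : ElecNetwork V) (f : V → V → ℝ) (hf : N.IsFlow f)
    (h : N.energy f ≤ 0) : ∀ u v, f u v = 0 := by
  have hterm : ∀ u v : V, 0 ≤ (if N.c u v = 0 then 0 else f u v ^ 2 / N.c u v) := by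
    intro u v
    by_cases hc : N.c u v = 0
    · simp [hc]
    · rw [if_neg hc]
      exact div_nonneg (sq_nonneg _) (N.nonneg u v)
  have hsum : ∑ u, ∑ v, (if N.c u v = 0 then 0 else f u v ^ 2 / N.c u v) = 0 := by
    have h1 : 0 ≤ ∑ u, ∑ v, (if N.c u v = 0 then 0 else f u v ^ 2 / N.c u v) :=
      Finset.sum_nonneg fun u _ => Finset.sum_nonneg fun v _ => hterm u v
    unfold ElecNetwork.energy at h
    linarith
  intro u v
  have h2 := (Finset.sum_eq_zero_iff_of_nonneg
    (fun u _ => Finset.sum_nonneg fun v _ => hterm u v)).mp hsum u (Finset.mem_univ u)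
  have h3 := (Finset.sum_eq_zero_iff_of_nonneg (fun v _ => hterm u v)).mp h2 v
    (Finset.mem_univ v)
  by_cases hc : N.c u v = 0
  · exact hf.2 u v hc
  · rw [if_neg hc] at h3
    have := div_eq_zero_iff.mp h3
    rcases this with h4 | h4
    · exact pow_eq_zero_iff (by norm_num) |>.mp h4
    · exact absurd h4 hc

/-- Any electric flow equals a potential flow that is a unit flow. -/
lemma elecFlow_eq_potFlow (N : ElecNetwork V) (x y : V) (φ : V → ℝ) (g : V → V → ℝ)
    (hp : N.IsUnitFlow x y (potFlow N φ)) (hg : N.IsElecFlow x y g) :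
    ∀ u v, g u v = potFlow N φ u v := by
  have hnet : ∀ u, netFlowOut g u = netFlowOut (potFlow N φ) u := by
    intro u
    by_cases hx : u = x
    · subst hx; rw [hg.1.2.1, hp.2.1]
    by_cases hy : u = y
    · subst hy; rw [hg.1.2.2.1, hp.2.2.1]
    · rw [hg.1.2.2.2 u hx hy, hp.2.2.2 u hx hy]
  have hdec := energy_decomp N φ g hg.1.1 hnet
  have hle := hg.2 (potFlow N φ) hp
  have hE : N.energy (fun u v => g u v - potFlow N φ u v) ≤ 0 := by linarith
  have hflow : N.IsFlow (fun u v => g u v - potFlow N φ u v) := by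
    constructor
    · intro u v
      show g u v - potFlow N φ u v = -(g v u - potFlow N φ v u)
      rw [hg.1.1.1 u v, (potFlow_isFlow N φ).1 u v]; ring
    · intro u v h
      show g u v - potFlow N φ u v = 0
      rw [hg.1.1.2 u v h, (potFlow_isFlow N φ).2 u v h, sub_zero]
  intro u v
  have h0 : g u v - potFlow N φ u v = 0 := energy_zero_of_nonpos N _ hflow hE u v
  linarith [h0]

/-- The graph Laplacian as a linear map. -/
def lapMap (N : ElecNetwork V) : (V → ℝ) →ₗ[ℝ] (V → ℝ) where
  toFun φ := fun z => netFlowOut (potFlow N φ) z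
  map_add' φ ψ := by
    funext z
    simp only [netFlowOut, potFlow, Pi.add_apply]
    rw [← Finset.sum_add_distrib]
    exact Finset.sum_congr rfl fun v _ => by ring
  map_smul' a φ := by
    funext z
    simp only [netFlowOut, potFlow, Pi.smul_apply, smul_eq_mul, RingHom.id_apply]
    rw [Finset.mul_sum]
    exact Finset.sum_congr rfl fun v _ => by ring

def sumL : (V → ℝ) →ₗ[ℝ] ℝ where
  toFun φ := ∑ z, φ z
  map_add' a b := by simp [Finset.sum_add_distrib]
  map_smul' a b := by simp [Finset.mul_sum]

lemma lap_ker_const (N : ElecNetwork V)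
    (conn : ∀ u v : V, Relation.ReflTransGen (fun a b => 0 < N.c a b) u v)
    (φ : V → ℝ) (h : lapMap N φ = 0) : ∀ u v : V, φ u = φ v := by
  have hstep : ∀ u v : V, 0 < N.c u v → φ u = φ v := by
    have hS : ∑ u, ∑ v, potFlow N φ u v * (φ u - φ v) = 0 := by
      rw [sum_mul_sub _ (potFlow_isFlow N φ).1 φ]
      have : ∀ u : V, netFlowOut (potFlow N φ) u = 0 := fun u => congrFun h u
      simp [this]
    have hterm : ∀ u v : V, potFlow N φ u v * (φ u - φ v)
        = N.c u v * (φ u - φ v) ^ 2 := by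
      intro u v; simp only [potFlow]; ring
    have hS2 : ∑ u, ∑ v, N.c u v * (φ u - φ v) ^ 2 = 0 := by
      rw [← hS]
      exact Finset.sum_congr rfl fun u _ => Finset.sum_congr rfl fun v _ =>
        (hterm u v).symm
    have hnn : ∀ u v : V, 0 ≤ N.c u v * (φ u - φ v) ^ 2 :=
      fun u v => mul_nonneg (N.nonneg u v) (sq_nonneg _)
    intro u v hc
    have h2 := (Finset.sum_eq_zero_iff_of_nonneg
      (fun u _ => Finset.sum_nonneg fun v _ => hnn u v)).mp hS2 u (Finset.mem_univ u)
    have h3 := (Finset.sum_eq_zero_iff_of_nonneg (fun v _ => hnn u v)).mp h2 v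
      (Finset.mem_univ v)
    have h4 : (φ u - φ v) ^ 2 = 0 := by
      rcases mul_eq_zero.mp h3 with h5 | h5
      · exact absurd h5 hc.ne'
      · exact h5
    have := (pow_eq_zero_iff two_ne_zero).mp h4
    linarith [this]
  intro u v
  induction conn u v with
  | refl => rfl
  | tail _ hc ih => exact ih.trans (hstep _ _ hc)

lemma exists_pot (N : ElecNetwork V)
    (conn : ∀ u v : V, Relation.ReflTransGen (fun a b => 0 < N.c a b) u v)
    (x y : V) (hxy : x ≠ y) : ∃ φ : V → ℝ, N.IsUnitFlow x y (potFlow N φ) := by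
  have : Nonempty V := ⟨x⟩
  set n := Fintype.card V with hn
  have hnpos : 0 < n := Fintype.card_pos
  -- range lapMap ≤ ker sumL
  have hle : LinearMap.range (lapMap (V := V) N) ≤ LinearMap.ker (sumL (V := V)) := by
    rintro _ ⟨φ, rfl⟩
    simp only [LinearMap.mem_ker]
    show ∑ z, netFlowOut (potFlow N φ) z = 0
    have : ∑ z, netFlowOut (potFlow N φ) z = ∑ z, ∑ v, potFlow N φ z v := rfl
    rw [this]
    exact sum_sum_antisym _ (potFlow_isFlow N φ).1
  -- finrank of ker sumL is n - 1
  have hsurj : Function.Surjective (sumL (V := V)) := by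
    intro r
    refine ⟨fun _ => r / n, ?_⟩
    show ∑ _z : V, r / (n : ℝ) = r
    rw [Finset.sum_const, Finset.card_univ, nsmul_eq_mul]
    field_simp
    rw [hn]; ring
  have hrank1 : Module.finrank ℝ (LinearMap.range (sumL (V := V))) = 1 := by
    rw [LinearMap.range_eq_top.mpr hsurj]
    simp
  have hkerS : Module.finrank ℝ (LinearMap.ker (sumL (V := V))) = n - 1 := by
    have := LinearMap.finrank_range_add_finrank_ker (sumL (V := V))
    rw [hrank1] at this
    have hdim : Module.finrank ℝ (V → ℝ) = n := by
      simp [Module.finrank_fintype_fun_eq_card]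
      exact hn.symm
    omega
  -- ker lapMap ≤ span of constants
  have hkerL : Module.finrank ℝ (LinearMap.ker (lapMap (V := V) N)) ≤ 1 := by
    have hle2 : LinearMap.ker (lapMap (V := V) N)
        ≤ Submodule.span ℝ {(fun _ => (1 : ℝ) : V → ℝ)} := by
      intro φ hφ
      rw [Submodule.mem_span_singleton]
      refine ⟨φ x, ?_⟩
      funext z
      have := lap_ker_const N conn φ hφ z x
      simp [this]
    calc Module.finrank ℝ (LinearMap.ker (lapMap (V := V) N))
        ≤ Module.finrank ℝ (Submodule.span ℝ {(fun _ => (1 : ℝ) : V → ℝ)}) :=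
          Submodule.finrank_mono hle2
      _ = 1 := finrank_span_singleton (by
            intro hcon
            have := congrFun hcon x
            simp at this)
  have hrangeL : Module.finrank ℝ (LinearMap.ker (sumL (V := V)))
      ≤ Module.finrank ℝ (LinearMap.range (lapMap (V := V) N)) := by
    have := LinearMap.finrank_range_add_finrank_ker (lapMap (V := V) N)
    have hdim : Module.finrank ℝ (V → ℝ) = n := by
      simp [Module.finrank_fintype_fun_eq_card]
      exact hn.symm
    omega
  have heq : LinearMap.range (lapMap (V := V) N) = LinearMap.ker (sumL (V := V)) :=
    Submodule.eq_of_le_of_finrank_le hle hrangeL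
  -- the target divergence
  set δ : V → ℝ := fun z => (if z = x then 1 else 0) - (if z = y then 1 else 0) with hδ
  have hδmem : δ ∈ LinearMap.ker (sumL (V := V)) := by
    simp only [LinearMap.mem_ker]
    show ∑ z, ((if z = x then (1:ℝ) else 0) - (if z = y then 1 else 0)) = 0
    rw [Finset.sum_sub_distrib]
    simp
  rw [← heq] at hδmem
  obtain ⟨φ, hφ⟩ := hδmem
  refine ⟨φ, potFlow_isFlow N φ, ?_, ?_, ?_⟩
  · have := congrFun hφ x
    show netFlowOut (potFlow N φ) x = 1
    rw [show netFlowOut (potFlow N φ) x = lapMap (V := V) N φ x from rfl, this, hδ]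
    simp [hxy]
  · have := congrFun hφ y
    show netFlowOut (potFlow N φ) y = -1
    rw [show netFlowOut (potFlow N φ) y = lapMap (V := V) N φ y from rfl, this, hδ]
    simp [Ne.symm hxy]
  · intro u hux huy
    have := congrFun hφ u
    rw [show netFlowOut (potFlow N φ) u = lapMap (V := V) N φ u from rfl, this, hδ]
    simp [hux, huy]

/-- Minimum principle: the potential of a flow from `a` to `b` attains its minimum
at the sink `b`. -/
lemma min_principle (N : ElecNetwork V)
    (conn : ∀ u v : V, Relation.ReflTransGen (fun p q => 0 < N.c p q) u v)
    (a b : V) (s : ℝ) (hs : 0 < s) (u : V → ℝ)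
    (hdiv : ∀ z : V, netFlowOut (potFlow N u) z
      = (if z = a then s else 0) - (if z = b then s else 0)) :
    ∀ z : V, u b ≤ u z := by
  obtain ⟨z₀, -, hz₀⟩ := Finset.exists_min_image Finset.univ u ⟨b, Finset.mem_univ b⟩
  have hz₀' : ∀ z : V, u z₀ ≤ u z := fun z => hz₀ z (Finset.mem_univ z)
  -- propagation of the minimum along edges, away from b
  have prop : ∀ z : V, u z = u z₀ → z ≠ b → ∀ v : V, 0 < N.c z v → u v = u z₀ := by
    intro z hz hzb v hcv
    have hterm : ∀ v : V, N.c z v * (u z - u v) ≤ 0 := by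
      intro v
      apply mul_nonpos_of_nonneg_of_nonpos (N.nonneg z v)
      have := hz₀' v
      rw [hz]
      linarith
    have hsum : ∑ v, N.c z v * (u z - u v) ≤ 0 :=
      Finset.sum_nonpos fun v _ => hterm v
    have hval : ∑ v, N.c z v * (u z - u v)
        = (if z = a then s else 0) - (if z = b then s else 0) := hdiv z
    rw [if_neg hzb, sub_zero] at hval
    by_cases hza : z = a
    · rw [if_pos hza] at hval; linarith
    · rw [if_neg hza] at hval
      have hzero := (Finset.sum_eq_zero_iff_of_nonpos fun v _ => hterm v).mp hval v
        (Finset.mem_univ v)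
      have h4 : u z - u v = 0 := by
        rcases mul_eq_zero.mp hzero with h5 | h5
        · exact absurd h5 hcv.ne'
        · exact h5
      rw [← hz]
      linarith
  -- propagate along a path from z₀ to b
  have key : ∀ z : V, Relation.ReflTransGen (fun p q => 0 < N.c p q) z b →
      u z = u z₀ → u b = u z₀ := by
    intro z hpath
    induction hpath using Relation.ReflTransGen.head_induction_on with
    | refl => exact fun h => h
    | head hpq hpath ih =>
      rename_i p q
      intro hz
      by_cases hzb : p = b
      · rw [← hzb]; exact hz
      · exact ih (prop p hz hzb q hpq)
  have hub : u b = u z₀ := key z₀ (conn z₀ b) rfl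
  intro z
  rw [hub]
  exact hz₀' z

/-- **Lemma 2.2.** Let `G` be a finite connected electric network, `x ≠ y`, and let
`g` be the unit electric flow from `x` to `y`. Suppose `w, w₁, w₂` are three distinct
vertices with `g_{w₁ w} > 0` and `g_{w₂ w} > 0`. If the conductance of the edge
`⟨w₂, w⟩` is increased by `c_Δ > 0` and `g'` denotes the unit electric flow from `x`
to `y` in the new network, then `g'_{w₁ w} ≤ g_{w₁ w}`. -/
theorem elecFlow_mono_of_addCond :
    ∀ (V : Type) [Fintype V] [DecidableEq V] (N : ElecNetwork V),
      (∀ u v : V, Relation.ReflTransGen (fun a b => 0 < N.c a b) u v) →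
      ∀ x y : V, x ≠ y →
      ∀ g : V → V → ℝ, N.IsElecFlow x y g →
      ∀ w w₁ w₂ : V, ∀ (_ : w ≠ w₁) (hww₂ : w ≠ w₂) (_ : w₁ ≠ w₂),
        0 < g w₁ w → 0 < g w₂ w →
      ∀ (t : ℝ) (ht : 0 < t),
      ∀ g' : V → V → ℝ, (N.addCond w₂ w hww₂.symm t ht.le).IsElecFlow x y g' →
        g' w₁ w ≤ g w₁ w := by
  intro V _ _ N conn x y hxy g hg w w₁ w₂ hww₁ hww₂ hw₁w₂ hg1 hg2 t ht g' hg'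
  set N' := N.addCond w₂ w hww₂.symm t ht.le with hN'
  have hc' : ∀ u v : V, N'.c u v
      = N.c u v + (if (u = w₂ ∧ v = w) ∨ (u = w ∧ v = w₂) then t else 0) := fun _ _ => rfl
  have hmono : ∀ u v : V, N.c u v ≤ N'.c u v := by
    intro u v
    rw [hc']
    split <;> linarith
  have conn' : ∀ u v : V, Relation.ReflTransGen (fun a b => 0 < N'.c a b) u v := by
    intro u v
    exact Relation.ReflTransGen.mono (r := fun a b => 0 < N.c a b) (p := fun a b => 0 < N'.c a b)
      (fun a b hab => lt_of_lt_of_le hab (hmono a b)) u v (conn u v)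
  obtain ⟨φ, hφ⟩ := exists_pot N conn x y hxy
  obtain ⟨φ', hφ'⟩ := exists_pot N' conn' x y hxy
  have hgeq : ∀ u v, g u v = potFlow N φ u v := elecFlow_eq_potFlow N x y φ g hφ hg
  have hg'eq : ∀ u v, g' u v = potFlow N' φ' u v := elecFlow_eq_potFlow N' x y φ' g' hφ' hg'
  -- basic positivity facts
  have hg1' : 0 < N.c w₁ w * (φ w₁ - φ w) := by
    have h := hg1
    rw [hgeq w₁ w] at h
    simpa [potFlow] using h
  have hg2' : 0 < N.c w₂ w * (φ w₂ - φ w) := by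
    have h := hg2
    rw [hgeq w₂ w] at h
    simpa [potFlow] using h
  have hd1 : 0 < φ w₁ - φ w := by
    rcases mul_pos_iff.mp hg1' with ⟨-, h⟩ | ⟨h, -⟩
    · exact h
    · linarith [N.nonneg w₁ w]
  have hd2 : 0 < φ w₂ - φ w := by
    rcases mul_pos_iff.mp hg2' with ⟨-, h⟩ | ⟨h, -⟩
    · exact h
    · linarith [N.nonneg w₂ w]
  set s : ℝ := t * (φ w₂ - φ w) with hsdef
  have hs : 0 < s := mul_pos ht hd2
  set u : V → ℝ := fun z => φ z - φ' z with hu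
  -- unit-flow divergences
  have unet : ∀ (f : V → V → ℝ) (N₀ : ElecNetwork V), N₀.IsUnitFlow x y f →
      ∀ z : V, netFlowOut f z = (if z = x then 1 else 0) - (if z = y then 1 else 0) := by
    intro f N₀ hf z
    by_cases hzx : z = x
    · subst hzx; rw [hf.2.1]; simp [hxy]
    by_cases hzy : z = y
    · subst hzy; rw [hf.2.2.1]; simp [Ne.symm hxy]
    · rw [hf.2.2.2 z hzx hzy]; simp [hzx, hzy]
  -- pointwise identity for the difference flow
  have hpoint : ∀ z v : V, potFlow N' u z v
      = potFlow N φ z v - potFlow N' φ' z v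
        + ((if z = w₂ ∧ v = w then s else 0) - (if z = w ∧ v = w₂ then s else 0)) := by
    intro z v
    simp only [potFlow, hu, hc']
    by_cases h1 : z = w₂ ∧ v = w
    · have h2 : ¬(z = w ∧ v = w₂) := fun h => hww₂ (h.1.symm.trans h1.1)
      rw [if_pos (Or.inl h1), if_pos h1, if_neg h2, h1.1, h1.2, hsdef]
      ring
    · by_cases h2 : z = w ∧ v = w₂
      · rw [if_pos (Or.inr h2), if_neg h1, if_pos h2, h2.1, h2.2, hsdef]
        ring
      · have h3 : ¬((z = w₂ ∧ v = w) ∨ (z = w ∧ v = w₂)) := by tauto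
        rw [if_neg h3, if_neg h1, if_neg h2]
        ring
  have hdiv : ∀ z : V, netFlowOut (potFlow N' u) z
      = (if z = w₂ then s else 0) - (if z = w then s else 0) := by
    intro z
    unfold netFlowOut
    rw [Finset.sum_congr rfl fun v _ => hpoint z v]
    rw [Finset.sum_add_distrib, Finset.sum_sub_distrib, Finset.sum_sub_distrib]
    rw [← netFlowOut, ← netFlowOut, unet _ N hφ z, unet _ N' hφ' z]
    have e1 : ∑ v : V, (if z = w₂ ∧ v = w then s else 0) = (if z = w₂ then s else 0) := by
      by_cases hz : z = w₂ <;> simp [hz]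
    have e2 : ∑ v : V, (if z = w ∧ v = w₂ then s else 0) = (if z = w then s else 0) := by
      by_cases hz : z = w <;> simp [hz]
    rw [e1, e2]
    ring
  have hmin := min_principle N' conn' w₂ w s hs u hdiv w₁
  -- conclude
  have hcne : N'.c w₁ w = N.c w₁ w := by
    rw [hc']
    have : ¬((w₁ = w₂ ∧ w = w) ∨ (w₁ = w ∧ w = w₂)) := by
      rintro (⟨h1, -⟩ | ⟨h1, -⟩)
      · exact hw₁w₂ h1
      · exact hww₁ h1.symm
    rw [if_neg this, add_zero]
  rw [hg'eq w₁ w, hgeq w₁ w]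
  simp only [potFlow, hcne]
  apply mul_le_mul_of_nonneg_left _ (N.nonneg w₁ w)
  have : u w ≤ u w₁ := hmin
  simp only [hu] at this
  linarith
end
end

section
/- For all β > 0 there exists a constant c₁ = c₁(β) > 0, depending only on β, such that for all m ∈ ℕ, all i ∈ ℤ, and all sufficiently large M ∈ ℕ, P[ξ_i ≤ M] ≥ 1 − e^{−c₁M}, where ξ_i is the number of points u in the interval I_i = [im,(i+1)m) for which there exists v ∈ [(i−1)m,(i+2)m)^c with ⟨u,v⟩ ∈ ℰ. -/
open MeasureTheory ProbabilityTheory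
open scoped ENNReal

noncomputable section

/-- The probability that the edge `⟨i,j⟩` (with `|i-j| > 1`) is present in the
critical long-range percolation model with parameter `β`. -/
def edgeProb (β : ℝ) (i j : ℤ) : ℝ :=
  1 - Real.exp (-(β * ∫ u in (i : ℝ)..((i : ℝ) + 1),
      ∫ v in (j : ℝ)..((j : ℝ) + 1), 1 / (u - v) ^ 2))

/-- The critical long-range percolation (β-LRP) model on `ℤ`, realized on a measure
space `(Ω, μ)`: a random symmetric, loopless edge configuration where nearest
neighbours are always joined, an edge `⟨i,j⟩` with `|i-j| > 1` is present with
probability `edgeProb β i j`, and all edges are independent. -/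
structure LRP (β : ℝ) {Ω : Type} [MeasurableSpace Ω] (μ : Measure Ω) where
  edge : Ω → ℤ → ℤ → Bool
  symm : ∀ ω i j, edge ω i j = edge ω j i
  loopless : ∀ ω i, edge ω i i = false
  nearest : ∀ ω i j, |i - j| = 1 → edge ω i j = true
  measurable_edge : ∀ i j, Measurable fun ω => edge ω i j
  prob_edge : ∀ i j : ℤ, 1 < |i - j| →
    μ {ω | edge ω i j = true} = ENNReal.ofReal (edgeProb β i j)
  indep : iIndepFun
    (fun (p : {p : ℤ × ℤ // p.1 < p.2}) ω => edge ω p.1.1 p.1.2) μ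

/-- `f` is a flow with respect to the edge configuration `E`. -/
def IsFlow (E : ℤ → ℤ → Bool) (f : ℤ → ℤ → ℝ) : Prop :=
  (∀ i j, f i j = - f j i) ∧ ∀ i j, E i j = false → f i j = 0

/-- The net flow of `f` out of `i`. -/
def netFlow (f : ℤ → ℤ → ℝ) (i : ℤ) : ℝ := ∑' j : ℤ, f i j

/-- `f` is a unit flow from the finite set `S` to the finite set `T`
(with respect to the edge configuration `E`). -/
def IsUnitFlow (E : ℤ → ℤ → Bool) (f : ℤ → ℤ → ℝ) (S T : Finset ℤ) : Prop :=
  IsFlow E f ∧ (∑ i ∈ S, netFlow f i) = 1 ∧ (∑ i ∈ T, netFlow f i) = -1 ∧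
    ∀ j : ℤ, j ∉ S → j ∉ T → netFlow f j = 0

/-- The energy `(1/2) ∑_{i∼j} f_{ij}²` of a flow. -/
def energy (f : ℤ → ℤ → ℝ) : ℝ≥0∞ :=
  (1 / 2 : ℝ≥0∞) * ∑' p : ℤ × ℤ, ENNReal.ofReal (f p.1 p.2 ^ 2)

/-- The effective resistance `R(A,B)` between two subsets of `ℤ`. -/
def effRes (E : ℤ → ℤ → Bool) (A B : Set ℤ) : ℝ≥0∞ :=
  ⨅ (S : Finset ℤ) (_ : (S : Set ℤ) ⊆ A) (T : Finset ℤ) (_ : (T : Set ℤ) ⊆ B)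
    (f : ℤ → ℤ → ℝ) (_ : IsUnitFlow E f S T), energy f

/-- The effective resistance `R_I(A,B)` restricted to `I`: only unit flows from
`A ∩ I` to `B ∩ I` vanishing on every edge not having both endpoints in `I`
are allowed. -/
def effResIn (E : ℤ → ℤ → Bool) (I A B : Set ℤ) : ℝ≥0∞ :=
  ⨅ (S : Finset ℤ) (_ : (S : Set ℤ) ⊆ A ∩ I) (T : Finset ℤ) (_ : (T : Set ℤ) ⊆ B ∩ I)
    (f : ℤ → ℤ → ℝ) (_ : IsUnitFlow E f S T ∧ ∀ i j : ℤ, i ∉ I ∨ j ∉ I → f i j = 0),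
      energy f

/-- `Λ(n) = max_{i,j ∈ [0,n)} E[R_{[0,n)}(i,j)]`. -/
def Lambda {β : ℝ} {Ω : Type} [MeasurableSpace Ω] {μ : Measure Ω} (L : LRP β μ)
    (n : ℕ) : ℝ≥0∞ :=
  ⨆ i ∈ Set.Ico (0 : ℤ) (n : ℤ), ⨆ j ∈ Set.Ico (0 : ℤ) (n : ℤ),
    ∫⁻ ω, effResIn (L.edge ω) (Set.Ico (0 : ℤ) (n : ℤ)) {i} {j} ∂μ

/-- The event that no edge joins `[-n,n]` and `[-2n,2n]ᶜ`. -/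
def noCross {β : ℝ} {Ω : Type} [MeasurableSpace Ω] {μ : Measure Ω} (L : LRP β μ)
    (n : ℕ) : Set Ω :=
  {ω | ∀ i j : ℤ, i ∈ Set.Icc (-(n : ℤ)) (n : ℤ) →
    j ∈ (Set.Icc (-(2 * (n : ℤ))) (2 * (n : ℤ)))ᶜ → L.edge ω i j = false}

/-- `ξ_i`: the number of points `u` of the interval `I_i = [im,(i+1)m)` that are
joined by an edge to some point outside `[(i-1)m,(i+2)m)`. -/
def xiDeg {β : ℝ} {Ω : Type} [MeasurableSpace Ω] {μ : Measure Ω} (L : LRP β μ)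
    (m : ℕ) (i : ℤ) (ω : Ω) : ℕ :=
  Set.ncard {u : ℤ | u ∈ Set.Ico (i * (m : ℤ)) ((i + 1) * (m : ℤ)) ∧
    ∃ v : ℤ, v ∉ Set.Ico ((i - 1) * (m : ℤ)) ((i + 2) * (m : ℤ)) ∧ L.edge ω u v = true}


section AuxLemmas

open intervalIntegral in

lemma one_sub_exp_neg_le (t : ℝ) : 1 - Real.exp (-t) ≤ t := by
  have h := Real.add_one_le_exp (-t); linarith

lemma double_integral_le (u v c : ℝ) (hc : 1 ≤ c)
    (h : ∀ x ∈ Set.Icc u (u+1), ∀ y ∈ Set.Icc v (v+1), c ≤ |x - y|) :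
    (∫ x in u..(u+1), ∫ y in v..(v+1), 1/(x-y)^2) ≤ 1/c^2 := by
  have hc0 : (0:ℝ) < c := lt_of_lt_of_le one_pos hc
  have hne : ∀ x ∈ Set.Icc u (u+1), ∀ y ∈ Set.Icc v (v+1), x - y ≠ 0 := by
    intro x hx y hy h0
    have := h x hx y hy
    rw [h0, abs_zero] at this; linarith
  have hcont : ∀ x ∈ Set.Icc u (u+1),
      ContinuousOn (fun y : ℝ => 1/(x-y)^2) (Set.Icc v (v+1)) := by
    intro x hx
    exact continuousOn_const.div
      (((continuousOn_const.sub continuousOn_id)).pow 2)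
      (fun y hy => pow_ne_zero 2 (hne x hx y hy))
  have hint : ∀ x ∈ Set.Icc u (u+1),
      IntervalIntegrable (fun y : ℝ => 1/(x-y)^2) volume v (v+1) := by
    intro x hx
    exact (hcont x hx).intervalIntegrable_of_Icc (by linarith)
  have hinner_le : ∀ x ∈ Set.Icc u (u+1),
      (∫ y in v..(v+1), 1/(x-y)^2) ≤ 1/c^2 := by
    intro x hx
    calc (∫ y in v..(v+1), 1/(x-y)^2) ≤ ∫ _y in v..(v+1), 1/c^2 := by
          apply intervalIntegral.integral_mono_on (by linarith) (hint x hx)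
            intervalIntegrable_const
          intro y hy
          have h1 := h x hx y hy
          have h2 : c^2 ≤ (x-y)^2 := by
            have := pow_le_pow_left₀ hc0.le h1 2
            rwa [sq_abs] at this
          exact one_div_le_one_div_of_le (by positivity) h2
      _ = 1/c^2 := by simp
  have hinner_eq : ∀ x ∈ Set.Icc u (u+1),
      (∫ y in v..(v+1), 1/(x-y)^2) = (x - (v+1))⁻¹ - (x - v)⁻¹ := by
    intro x hx
    have hder : ∀ y ∈ Set.uIcc v (v+1),
        HasDerivAt (fun y : ℝ => (x - y)⁻¹) (1/(x-y)^2) y := by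
      intro y hy
      rw [Set.uIcc_of_le (by linarith)] at hy
      have h1 : HasDerivAt (fun y : ℝ => x - y) (-1) y := (hasDerivAt_id y).const_sub x
      have h2 : HasDerivAt (fun y : ℝ => (x - y)⁻¹) _ y := h1.inv (hne x hx y hy)
      convert h2 using 1
      field_simp
    exact intervalIntegral.integral_eq_sub_of_hasDerivAt hder (hint x hx)
  have hv1 : (v+1) ∈ Set.Icc v (v+1) := by constructor <;> linarith
  have hv0 : v ∈ Set.Icc v (v+1) := by constructor <;> linarith
  have hφcont : ContinuousOn (fun x : ℝ => (x - (v+1))⁻¹ - (x - v)⁻¹) (Set.Icc u (u+1)) := by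
    apply ContinuousOn.sub
    · exact (continuousOn_id.sub continuousOn_const).inv₀
        (fun x hx => hne x hx (v+1) hv1)
    · exact (continuousOn_id.sub continuousOn_const).inv₀
        (fun x hx => hne x hx v hv0)
  have hEq : Set.EqOn (fun x => ∫ y in v..(v+1), 1/(x-y)^2)
      (fun x : ℝ => (x - (v+1))⁻¹ - (x - v)⁻¹) (Set.uIcc u (u+1)) := by
    rw [Set.uIcc_of_le (by linarith)]
    intro x hx
    exact hinner_eq x hx
  calc (∫ x in u..(u+1), ∫ y in v..(v+1), 1/(x-y)^2)
      = ∫ x in u..(u+1), ((x - (v+1))⁻¹ - (x - v)⁻¹) := intervalIntegral.integral_congr hEq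
    _ ≤ ∫ _x in u..(u+1), 1/c^2 := by
        apply intervalIntegral.integral_mono_on (by linarith)
          (hφcont.intervalIntegrable_of_Icc (by linarith)) intervalIntegrable_const
        intro x hx
        rw [← hinner_eq x hx]
        exact hinner_le x hx
    _ = 1/c^2 := by simp

lemma edgeProb_le (β : ℝ) (hβ : 0 ≤ β) (u v : ℤ) (h2 : 1 < |u - v|) :
    edgeProb β u v ≤ β / ((|u - v| - 1 : ℤ) : ℝ)^2 := by
  set c : ℝ := ((|u - v| - 1 : ℤ) : ℝ) with hcdef
  have h2' : (2:ℤ) ≤ |u - v| := h2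
  have hc : 1 ≤ c := by
    rw [hcdef]; exact_mod_cast (by omega : (1:ℤ) ≤ |u - v| - 1)
  have huv : u ≠ v := by intro h; rw [h] at h2; simp at h2
  have habs : ∀ x ∈ Set.Icc (u:ℝ) ((u:ℝ)+1), ∀ y ∈ Set.Icc (v:ℝ) ((v:ℝ)+1), c ≤ |x - y| := by
    intro x hx y hy
    rcases lt_or_gt_of_ne huv with hlt | hgt
    · have habs' : |u - v| = v - u := by
        rw [abs_sub_comm]; exact abs_of_pos (by omega)
      have hcval : c = ((v:ℝ) - u) - 1 := by rw [hcdef, habs']; push_cast; ring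
      have h1 : c ≤ y - x := by
        have := hx.2; have := hy.1; rw [hcval]; linarith
      calc c ≤ y - x := h1
        _ ≤ |x - y| := by rw [abs_sub_comm]; exact le_abs_self _
    · have habs' : |u - v| = u - v := abs_of_pos (by omega)
      have hcval : c = ((u:ℝ) - v) - 1 := by rw [hcdef, habs']; push_cast; ring
      have h1 : c ≤ x - y := by
        have := hx.1; have := hy.2; rw [hcval]; linarith
      calc c ≤ x - y := h1
        _ ≤ |x - y| := le_abs_self _
  have hint := double_integral_le (u:ℝ) (v:ℝ) c hc habs
  have h1 := one_sub_exp_neg_le (β * ∫ x in (u:ℝ)..((u:ℝ)+1), ∫ y in (v:ℝ)..((v:ℝ)+1), 1/(x-y)^2)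
  calc edgeProb β u v ≤ β * ∫ x in (u:ℝ)..((u:ℝ)+1), ∫ y in (v:ℝ)..((v:ℝ)+1), 1/(x-y)^2 := h1
    _ ≤ β * (1/c^2) := mul_le_mul_of_nonneg_left hint hβ
    _ = β / c^2 := by ring


lemma sum_nat_inv_sq_le (m : ℕ) (hm : 0 < m) (T : Finset ℕ) (hT : ∀ k ∈ T, m ≤ k) :
    ∑ k ∈ T, (1:ℝ)/(k:ℝ)^2 ≤ 2/m := by
  set N := T.sup id + 1 with hN
  have hsub : T ⊆ Finset.Ico m N := by
    intro k hk
    have h1 : k ≤ T.sup id := Finset.le_sup (f := id) hk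
    exact Finset.mem_Ico.2 ⟨hT k hk, by omega⟩
  have h1 : ∑ k ∈ T, (1:ℝ)/(k:ℝ)^2 ≤ ∑ k ∈ Finset.Ico m N, (1:ℝ)/(k:ℝ)^2 :=
    Finset.sum_le_sum_of_subset_of_nonneg hsub (by intros; positivity)
  have h2 : ∀ k ∈ Finset.Ico m N, (1:ℝ)/(k:ℝ)^2 ≤ 2 * ((1:ℝ)/(k:ℝ) - 1/((k:ℝ)+1)) := by
    intro k hk
    have hk1 : 1 ≤ k := le_trans hm (Finset.mem_Ico.1 hk).1
    have hk0 : (1:ℝ) ≤ (k:ℝ) := by exact_mod_cast hk1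
    have hsub : (1:ℝ)/(k:ℝ) - 1/((k:ℝ)+1) = 1/((k:ℝ)*((k:ℝ)+1)) := by
      field_simp
      ring
    rw [hsub, mul_one_div, div_le_div_iff₀ (by positivity) (by positivity)]
    nlinarith
  rcases T.eq_empty_or_nonempty with rfl | ⟨k0, hk0⟩
  · simp; positivity
  have hmN : m ≤ N := by
    have hk1 : k0 ≤ T.sup id := Finset.le_sup (f := id) hk0
    have := hT k0 hk0; omega
  have h3 : ∑ k ∈ Finset.Ico m N, ((1:ℝ)/(k:ℝ) - 1/((k:ℝ)+1)) = 1/m - 1/N := by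
    rw [Finset.sum_Ico_eq_sum_range]
    have h4 := Finset.sum_range_sub' (f := fun j => (1:ℝ)/((m:ℝ)+j)) (N - m)
    have hcast : (m:ℝ) + ((N-m : ℕ):ℝ) = (N:ℝ) := by
      push_cast [Nat.cast_sub hmN]; ring
    calc ∑ j ∈ Finset.range (N - m), ((1:ℝ)/((m + j : ℕ):ℝ) - 1/(((m + j : ℕ):ℝ)+1))
        = ∑ j ∈ Finset.range (N - m),
          ((1:ℝ)/((m:ℝ)+(j:ℝ)) - (1:ℝ)/((m:ℝ)+((j+1:ℕ):ℝ))) := by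
          apply Finset.sum_congr rfl; intro j _; push_cast; ring_nf
      _ = (1:ℝ)/((m:ℝ)+((0:ℕ):ℝ)) - 1/((m:ℝ)+((N-m : ℕ):ℝ)) := h4
      _ = 1/m - 1/N := by rw [hcast]; norm_num
  calc ∑ k ∈ T, (1:ℝ)/(k:ℝ)^2 ≤ ∑ k ∈ Finset.Ico m N, (1:ℝ)/(k:ℝ)^2 := h1
    _ ≤ ∑ k ∈ Finset.Ico m N, 2 * ((1:ℝ)/(k:ℝ) - 1/((k:ℝ)+1)) := Finset.sum_le_sum h2
    _ = 2 * (1/m - 1/N) := by rw [← Finset.mul_sum, h3]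
    _ ≤ 2/m := by
        have : (0:ℝ) ≤ 1/N := by positivity
        have h6 : 2/(m:ℝ) = 2*(1/m) := by ring
        rw [mul_sub, h6]; linarith
  

lemma sum_int_inv_sq_le (m : ℕ) (hm : 0 < m) (T : Finset ℤ) (e : ℤ → ℤ)
    (hinj : Set.InjOn e T) (hge : ∀ v ∈ T, (m:ℤ) ≤ e v) :
    ∑ v ∈ T, (1:ℝ)/((e v : ℤ):ℝ)^2 ≤ 2/(m:ℝ) := by
  have heq : ∑ v ∈ T, (1:ℝ)/((e v : ℤ):ℝ)^2
      = ∑ k ∈ T.image (fun v => (e v).toNat), (1:ℝ)/(k:ℝ)^2 := by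
    rw [Finset.sum_image]
    · apply Finset.sum_congr rfl
      intro v hv
      have h0 : (0:ℤ) ≤ e v := le_trans (by exact_mod_cast hm.le) (hge v hv)
      have h' : (((e v).toNat : ℕ) : ℝ) = ((e v : ℤ) : ℝ) := by
        rw [← Int.cast_natCast, Int.toNat_of_nonneg h0]
      rw [h']
    · intro x hx y hy hxy
      apply hinj hx hy
      have h0x : (0:ℤ) ≤ e x := le_trans (by exact_mod_cast hm.le) (hge x hx)
      have h0y : (0:ℤ) ≤ e y := le_trans (by exact_mod_cast hm.le) (hge y hy)
      beta_reduce at hxy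
      omega
  rw [heq]
  apply sum_nat_inv_sq_le m hm
  intro k hk
  obtain ⟨v, hv, rfl⟩ := Finset.mem_image.1 hk
  have := hge v hv; omega

/-- Normalized pair. -/
def prS (u v : ℤ) : {p : ℤ × ℤ // p.1 < p.2} :=
  if h : u < v then ⟨(u, v), h⟩ else if h' : v < u then ⟨(v, u), h'⟩ else ⟨(0, 1), by norm_num⟩

lemma prS_eq (u v : ℤ) (h : u ≠ v) : (prS u v).1 = (u, v) ∨ (prS u v).1 = (v, u) := by
  unfold prS
  rcases lt_or_gt_of_ne h with h1 | h1
  · rw [dif_pos h1]; left; rfl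
  · rw [dif_neg (by omega), dif_pos h1]; right; rfl

lemma expand_indep {β : ℝ} {Ω : Type} [MeasurableSpace Ω] {μ : Measure Ω} (L : LRP β μ)
    (S W : Finset ℤ) (hdisj : ∀ u ∈ S, u ∉ W) :
    μ (⋂ u ∈ S, ⋃ v ∈ W, {ω | L.edge ω u v = true})
      ≤ ∏ u ∈ S, ∑ v ∈ W, μ {ω | L.edge ω u v = true} := by
  classical
  have hFE : ∀ u v : ℤ, u ≠ v →
      {ω | L.edge ω (prS u v).1.1 (prS u v).1.2 = true} = {ω | L.edge ω u v = true} := by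
    intro u v h
    rcases prS_eq u v h with h' | h' <;> rw [h']
    ext ω
    simp only [Set.mem_setOf_eq, L.symm ω v u]
  have hsub : (⋂ u ∈ S, ⋃ v ∈ W, {ω | L.edge ω u v = true}) ⊆
      ⋃ g ∈ S.pi (fun _ => W), ⋂ u ∈ S.attach, {ω | L.edge ω u.1 (g u.1 u.2) = true} := by
    intro ω hω
    have hall : ∀ u (hu : u ∈ S), ∃ v, v ∈ W ∧ L.edge ω u v = true := by
      intro u hu
      have := Set.mem_iInter₂.1 hω u hu
      simpa using Set.mem_iUnion₂.1 this
    choose f hf1 hf2 using hall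
    refine Set.mem_iUnion₂.2 ⟨f, Finset.mem_pi.2 hf1, Set.mem_iInter₂.2 fun u hu => hf2 u.1 u.2⟩
  refine le_trans (measure_mono hsub) (le_trans (measure_biUnion_finset_le _ _) ?_)
  rw [Finset.prod_sum]
  apply Finset.sum_le_sum
  intro g hg
  have hgW : ∀ (u) (hu : u ∈ S), g u hu ∈ W := Finset.mem_pi.1 hg
  have hne : ∀ (u : {x // x ∈ S}), u.1 ≠ g u.1 u.2 := by
    intro u h
    exact hdisj u.1 u.2 (h ▸ hgW u.1 u.2)
  set e : {x // x ∈ S} → {p : ℤ × ℤ // p.1 < p.2} := fun u => prS u.1 (g u.1 u.2) with he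
  have hinj : ∀ x ∈ S.attach, ∀ y ∈ S.attach, e x = e y → x = y := by
    intro x _ y _ hxy
    have hxy' : (e x).1 = (e y).1 := by rw [hxy]
    rcases prS_eq x.1 (g x.1 x.2) (hne x) with h1 | h1 <;>
      rcases prS_eq y.1 (g y.1 y.2) (hne y) with h2 | h2 <;>
      rw [he] at hxy' <;> rw [h1, h2, Prod.mk.injEq] at hxy'
    · exact Subtype.ext hxy'.1
    · exfalso; apply hdisj x.1 x.2; rw [hxy'.1]; exact hgW y.1 y.2
    · exfalso; apply hdisj y.1 y.2; rw [← hxy'.1]; exact hgW x.1 x.2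
    · exact Subtype.ext hxy'.2
  apply le_of_eq
  calc μ (⋂ u ∈ S.attach, {ω | L.edge ω u.1 (g u.1 u.2) = true})
      = μ (⋂ p ∈ S.attach.image e, {ω | L.edge ω p.1.1 p.1.2 = true}) := by
        congr 1
        ext ω
        simp only [Set.mem_iInter]
        constructor
        · intro h p hp
          obtain ⟨u, hu, rfl⟩ := Finset.mem_image.1 hp
          rw [he, hFE _ _ (hne u)]
          exact h u hu
        · intro h u hu
          have := h (e u) (Finset.mem_image_of_mem e hu)
          rwa [he, hFE _ _ (hne u)] at this
    _ = ∏ p ∈ S.attach.image e, μ {ω | L.edge ω p.1.1 p.1.2 = true} := by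
        apply L.indep.meas_biInter
        intro p hp
        exact ⟨{true}, trivial, rfl⟩
    _ = ∏ u ∈ S.attach, μ {ω | L.edge ω (e u).1.1 (e u).1.2 = true} := Finset.prod_image hinj
    _ = ∏ u ∈ S.attach, μ {ω | L.edge ω u.1 (g u.1 u.2) = true} := by
        apply Finset.prod_congr rfl
        intro u _
        rw [he, hFE _ _ (hne u)]

lemma sum_edge_le (β : ℝ) (hβ : 0 < β) {Ω : Type} [MeasurableSpace Ω] {μ : Measure Ω}
    (L : LRP β μ) (m : ℕ) (hm : 0 < m) (i u : ℤ)
    (hu1 : i*(m:ℤ) ≤ u) (hu2 : u < (i+1)*(m:ℤ)) (W : Finset ℤ)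
    (hWf : ∀ v ∈ W, v < (i-1)*(m:ℤ) ∨ (i+2)*(m:ℤ) ≤ v) :
    ∑ v ∈ W, μ {ω | L.edge ω u v = true} ≤ ENNReal.ofReal (β * (4/m)) := by
  have hm' : (1:ℤ) ≤ (m:ℤ) := by exact_mod_cast hm
  have e1 : (i-1)*(m:ℤ) = i*(m:ℤ) - m := by ring
  have e2 : (i+2)*(m:ℤ) = i*(m:ℤ) + 2*m := by ring
  have e3 : (i+1)*(m:ℤ) = i*(m:ℤ) + m := by ring
  have hu2' : u + 1 ≤ i*(m:ℤ) + m := by rw [e3] at hu2; omega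
  have hleft : ∀ v, v < (i-1)*(m:ℤ) → (m:ℤ) ≤ u - v - 1 := by
    intro v hv; rw [e1] at hv; omega
  have hright : ∀ v, (i+2)*(m:ℤ) ≤ v → (m:ℤ) ≤ v - u - 1 := by
    intro v hv; rw [e2] at hv; omega
  have habsl : ∀ v, v < (i-1)*(m:ℤ) → |u - v| = u - v := by
    intro v hv; exact abs_of_nonneg (by have := hleft v hv; omega)
  have habsr : ∀ v, (i+2)*(m:ℤ) ≤ v → |u - v| = v - u := by
    intro v hv
    rw [abs_of_nonpos (by have := hright v hv; omega)]; ring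
  have h1lt : ∀ v ∈ W, 1 < |u - v| := by
    intro v hv
    rcases hWf v hv with h | h
    · have := hleft v h; have := habsl v h; omega
    · have := hright v h; have := habsr v h; omega
  have hedge : ∀ v ∈ W, μ {ω | L.edge ω u v = true}
      ≤ ENNReal.ofReal (β / ((|u - v| - 1 : ℤ) : ℝ)^2) := by
    intro v hv
    rw [L.prob_edge u v (h1lt v hv)]
    exact ENNReal.ofReal_le_ofReal (edgeProb_le β hβ.le u v (h1lt v hv))
  calc ∑ v ∈ W, μ {ω | L.edge ω u v = true}
      ≤ ∑ v ∈ W, ENNReal.ofReal (β / ((|u - v| - 1 : ℤ) : ℝ)^2) := Finset.sum_le_sum hedge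
    _ = ENNReal.ofReal (∑ v ∈ W, β / ((|u - v| - 1 : ℤ) : ℝ)^2) :=
        (ENNReal.ofReal_sum_of_nonneg (fun v _ => by positivity)).symm
    _ ≤ ENNReal.ofReal (β * (4/m)) := by
        apply ENNReal.ofReal_le_ofReal
        have hterm : ∀ v ∈ W, β / ((|u - v| - 1 : ℤ) : ℝ)^2
            = β * ((1:ℝ)/((|u - v| - 1 : ℤ) : ℝ)^2) := fun v _ => by ring
        rw [Finset.sum_congr rfl hterm, ← Finset.mul_sum]
        apply mul_le_mul_of_nonneg_left _ hβ.le
        rw [← Finset.sum_filter_add_sum_filter_not W (fun v => v < (i-1)*(m:ℤ))]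
        have hL : ∑ v ∈ W.filter (fun v => v < (i-1)*(m:ℤ)),
            (1:ℝ)/(((fun v => |u - v| - 1) v : ℤ):ℝ)^2 ≤ 2/(m:ℝ) := by
          apply sum_int_inv_sq_le m hm _ (fun v => |u - v| - 1)
          · intro x hx y hy hxy
            simp only [Finset.coe_filter, Set.mem_setOf_eq] at hx hy
            have hxy' : |u - x| - 1 = |u - y| - 1 := hxy
            rw [habsl x hx.2, habsl y hy.2] at hxy'
            omega
          · intro v hv
            have h' := Finset.mem_filter.1 hv
            rw [habsl v h'.2]
            have := hleft v h'.2; omega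
        have hR : ∑ v ∈ W.filter (fun v => ¬ v < (i-1)*(m:ℤ)),
            (1:ℝ)/(((fun v => |u - v| - 1) v : ℤ):ℝ)^2 ≤ 2/(m:ℝ) := by
          apply sum_int_inv_sq_le m hm _ (fun v => |u - v| - 1)
          · intro x hx y hy hxy
            simp only [Finset.coe_filter, Set.mem_setOf_eq] at hx hy
            have hbx : (i+2)*(m:ℤ) ≤ x := (hWf x hx.1).resolve_left hx.2
            have hby : (i+2)*(m:ℤ) ≤ y := (hWf y hy.1).resolve_left hy.2
            have hxy' : |u - x| - 1 = |u - y| - 1 := hxy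
            rw [habsr x hbx, habsr y hby] at hxy'
            omega
          · intro v hv
            have h' := Finset.mem_filter.1 hv
            have hbv : (i+2)*(m:ℤ) ≤ v := (hWf v h'.1).resolve_left h'.2
            rw [habsr v hbv]
            have := hright v hbv; omega
        have hmm : (0:ℝ) < m := by exact_mod_cast hm
        calc ∑ v ∈ W.filter (fun v => v < (i-1)*(m:ℤ)), (1:ℝ)/((|u - v| - 1 : ℤ):ℝ)^2
              + ∑ v ∈ W.filter (fun v => ¬ v < (i-1)*(m:ℤ)), (1:ℝ)/((|u - v| - 1 : ℤ):ℝ)^2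
            ≤ 2/(m:ℝ) + 2/(m:ℝ) := add_le_add hL hR
          _ = 4/(m:ℝ) := by ring

lemma inter_A_le (β : ℝ) (hβ : 0 < β) {Ω : Type} [MeasurableSpace Ω] {μ : Measure Ω}
    (L : LRP β μ) (m : ℕ) (hm : 0 < m) (i : ℤ) (S : Finset ℤ)
    (hS : ∀ u ∈ S, i*(m:ℤ) ≤ u ∧ u < (i+1)*(m:ℤ)) :
    μ (⋂ u ∈ S, {ω | ∃ v : ℤ, (v < (i-1)*(m:ℤ) ∨ (i+2)*(m:ℤ) ≤ v) ∧ L.edge ω u v = true})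
      ≤ ENNReal.ofReal (β * (4/m)) ^ S.card := by
  classical
  have hm' : (1:ℤ) ≤ (m:ℤ) := by exact_mod_cast hm
  set Wn : ℕ → Finset ℤ := fun n =>
    (Finset.Icc (-(n:ℤ)) (n:ℤ)).filter (fun v => v < (i-1)*(m:ℤ) ∨ (i+2)*(m:ℤ) ≤ v) with hWn
  have hSnotW : ∀ n : ℕ, ∀ u ∈ S, u ∉ Wn n := by
    intro n u hu hmem
    have h' := (Finset.mem_filter.1 hmem).2
    have h1 := (hS u hu).1
    have h2 := (hS u hu).2
    have e1 : (i-1)*(m:ℤ) = i*(m:ℤ) - m := by ring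
    have e2 : (i+2)*(m:ℤ) = i*(m:ℤ) + 2*m := by ring
    have e3 : (i+1)*(m:ℤ) = i*(m:ℤ) + m := by ring
    rw [e3] at h2
    rcases h' with h' | h'
    · rw [e1] at h'; omega
    · rw [e2] at h'; omega
  have hmono : Monotone (fun n : ℕ =>
      ⋂ u ∈ S, ⋃ v ∈ Wn n, {ω | L.edge ω u v = true}) := by
    intro n n' hnn'
    apply Set.iInter₂_mono
    intro u _
    have hWsub : Wn n ⊆ Wn n' := by
      apply Finset.filter_subset_filter
      apply Finset.Icc_subset_Icc
      · exact neg_le_neg (by exact_mod_cast hnn')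
      · exact_mod_cast hnn'
    exact Set.iUnion₂_mono' fun v hv => ⟨v, hWsub hv, subset_rfl⟩
  have hcup : (⋂ u ∈ S, {ω | ∃ v : ℤ, (v < (i-1)*(m:ℤ) ∨ (i+2)*(m:ℤ) ≤ v) ∧ L.edge ω u v = true})
      = ⋃ n : ℕ, ⋂ u ∈ S, ⋃ v ∈ Wn n, {ω | L.edge ω u v = true} := by
    apply Set.Subset.antisymm
    · intro ω hω
      have hall : ∀ u (hu : u ∈ S), ∃ v : ℤ,
          (v < (i-1)*(m:ℤ) ∨ (i+2)*(m:ℤ) ≤ v) ∧ L.edge ω u v = true :=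
        fun u hu => Set.mem_iInter₂.1 hω u hu
      choose f hf1 hf2 using hall
      refine Set.mem_iUnion.2 ⟨S.attach.sup (fun u => (f u.1 u.2).natAbs), ?_⟩
      apply Set.mem_iInter₂.2
      intro u hu
      apply Set.mem_iUnion₂.2
      refine ⟨f u hu, ?_, hf2 u hu⟩
      apply Finset.mem_filter.2
      refine ⟨?_, hf1 u hu⟩
      have hle : (f u hu).natAbs ≤ S.attach.sup (fun u => (f u.1 u.2).natAbs) :=
        Finset.le_sup (f := fun u : {x // x ∈ S} => (f u.1 u.2).natAbs)
          (Finset.mem_attach S ⟨u, hu⟩)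
      apply Finset.mem_Icc.2
      omega
    · apply Set.iUnion_subset
      intro n
      apply Set.iInter₂_mono
      intro u _
      apply Set.iUnion₂_subset
      intro v hv
      intro ω hω
      exact ⟨v, (Finset.mem_filter.1 hv).2, hω⟩
  rw [hcup, Directed.measure_iUnion hmono.directed_le]
  apply iSup_le
  intro n
  calc μ (⋂ u ∈ S, ⋃ v ∈ Wn n, {ω | L.edge ω u v = true})
      ≤ ∏ u ∈ S, ∑ v ∈ Wn n, μ {ω | L.edge ω u v = true} := expand_indep L S (Wn n) (hSnotW n)
    _ ≤ ∏ _u ∈ S, ENNReal.ofReal (β * (4/m)) := by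
        apply Finset.prod_le_prod'
        intro u hu
        exact sum_edge_le β hβ L m hm i u (hS u hu).1 (hS u hu).2 (Wn n)
          (fun v hv => (Finset.mem_filter.1 hv).2)
    _ = ENNReal.ofReal (β * (4/m)) ^ S.card := Finset.prod_const _

end AuxLemmas

/-- **Lemma 3.6.** For all `β > 0` there is a constant `c₁ = c₁(β) > 0`, depending
only on `β`, such that for all `m ∈ ℕ`, all `i ∈ ℤ` and all sufficiently large
`M ∈ ℕ`, `P[ξ_i ≤ M] ≥ 1 - e^{-c₁ M}`. -/
theorem good_interval_probability :
    ∀ β : ℝ, 0 < β → ∃ c₁ : ℝ, 0 < c₁ ∧ ∃ M₀ : ℕ,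
      ∀ (Ω : Type) [MeasurableSpace Ω] (μ : Measure Ω) [IsProbabilityMeasure μ]
        (L : LRP β μ) (m : ℕ), 0 < m → ∀ (i : ℤ) (M : ℕ), M₀ ≤ M →
        1 - ENNReal.ofReal (Real.exp (-(c₁ * (M : ℝ)))) ≤
          μ {ω | xiDeg L m i ω ≤ M} := by
  intro β hβ
  refine ⟨1, one_pos, ?_⟩
  obtain ⟨M₀, hM₀⟩ : ∃ M₀ : ℕ, ∀ n, M₀ ≤ n → (4*β*Real.exp 1)^n / n.factorial ≤ 1 := by
    have h := FloorSemiring.tendsto_pow_div_factorial_atTop (K := ℝ) (4*β*Real.exp 1)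
    obtain ⟨N, hN⟩ := Metric.tendsto_atTop.1 h 1 one_pos
    refine ⟨N, fun n hn => ?_⟩
    have := hN n hn
    rw [Real.dist_eq, sub_zero] at this
    exact le_of_lt (lt_of_le_of_lt (le_abs_self _) this)
  refine ⟨M₀, ?_⟩
  intro Ω _ μ _ L m hm i M hM
  classical
  have hm0 : (0:ℝ) < (m:ℝ) := by exact_mod_cast hm
  -- the tail event bound
  have htail : μ {ω | M < xiDeg L m i ω} ≤ ENNReal.ofReal (Real.exp (-(1 * (M:ℝ)))) := by
    set P := Finset.powersetCard (M+1) (Finset.Ico (i*(m:ℤ)) ((i+1)*(m:ℤ))) with hP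
    have hcount : {ω | M < xiDeg L m i ω} ⊆
        ⋃ S ∈ P, ⋂ u ∈ S,
          {ω | ∃ v : ℤ, (v < (i-1)*(m:ℤ) ∨ (i+2)*(m:ℤ) ≤ v) ∧ L.edge ω u v = true} := by
      intro ω hω
      have hD : M + 1 ≤ Set.ncard {u : ℤ | u ∈ Set.Ico (i*(m:ℤ)) ((i+1)*(m:ℤ)) ∧
          ∃ v : ℤ, v ∉ Set.Ico ((i-1)*(m:ℤ)) ((i+2)*(m:ℤ)) ∧ L.edge ω u v = true} := hω
      obtain ⟨t, hts, htc⟩ := Set.exists_subset_card_eq hD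
      have htfin : t.Finite := by
        rcases t.finite_or_infinite with h | h
        · exact h
        · rw [Set.Infinite.ncard h] at htc; omega
      refine Set.mem_iUnion₂.2 ⟨htfin.toFinset, ?_, ?_⟩
      · apply Finset.mem_powersetCard.2
        constructor
        · intro u hu
          have h1 := (hts (htfin.mem_toFinset.1 hu)).1
          exact Finset.mem_Ico.2 (Set.mem_Ico.1 h1)
        · rw [← htc]
          exact (Set.ncard_eq_toFinset_card t htfin).symm
      · apply Set.mem_iInter₂.2
        intro u hu
        obtain ⟨hu1, v, hv1, hv2⟩ := hts (htfin.mem_toFinset.1 hu)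
        refine ⟨v, ?_, hv2⟩
        by_contra h
        push_neg at h
        exact hv1 ⟨h.1, h.2⟩
    have hstep : ∀ S ∈ P, μ (⋂ u ∈ S,
        {ω | ∃ v : ℤ, (v < (i-1)*(m:ℤ) ∨ (i+2)*(m:ℤ) ≤ v) ∧ L.edge ω u v = true})
        ≤ ENNReal.ofReal (β * (4/m)) ^ (M+1) := by
      intro S hS
      obtain ⟨hsub, hcard⟩ := Finset.mem_powersetCard.1 hS
      have := inter_A_le β hβ L m hm i S (fun u hu => by
        have := hsub hu
        exact ⟨(Finset.mem_Ico.1 this).1, (Finset.mem_Ico.1 this).2⟩)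
      rwa [hcard] at this
    have hcard_P : P.card = m.choose (M+1) := by
      rw [hP, Finset.card_powersetCard]
      congr 1
      rw [Int.card_Ico]
      have : (i+1)*(m:ℤ) - i*(m:ℤ) = m := by ring
      rw [this]
      exact Int.toNat_natCast m
    calc μ {ω | M < xiDeg L m i ω}
        ≤ μ (⋃ S ∈ P, ⋂ u ∈ S,
          {ω | ∃ v : ℤ, (v < (i-1)*(m:ℤ) ∨ (i+2)*(m:ℤ) ≤ v) ∧ L.edge ω u v = true}) :=
          measure_mono hcount
      _ ≤ ∑ S ∈ P, μ (⋂ u ∈ S,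
          {ω | ∃ v : ℤ, (v < (i-1)*(m:ℤ) ∨ (i+2)*(m:ℤ) ≤ v) ∧ L.edge ω u v = true}) :=
          measure_biUnion_finset_le _ _
      _ ≤ ∑ _S ∈ P, ENNReal.ofReal (β * (4/m)) ^ (M+1) := Finset.sum_le_sum hstep
      _ = (P.card : ℝ≥0∞) * ENNReal.ofReal (β * (4/m)) ^ (M+1) := by
          rw [Finset.sum_const, nsmul_eq_mul]
      _ = ENNReal.ofReal ((m.choose (M+1) : ℝ) * (β * (4/m)) ^ (M+1)) := by
          rw [hcard_P, ← ENNReal.ofReal_pow (by positivity), ← ENNReal.ofReal_natCast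
            (m.choose (M+1)), ← ENNReal.ofReal_mul (by positivity)]
      _ ≤ ENNReal.ofReal (Real.exp (-(1 * (M:ℝ)))) := by
          apply ENNReal.ofReal_le_ofReal
          -- numeric bound
          have hK : M₀ ≤ M + 1 := le_trans hM (Nat.le_succ M)
          have hchoose : (m.choose (M+1) : ℝ) ≤ (m:ℝ)^(M+1) / (M+1).factorial :=
            Nat.choose_le_pow_div (M+1) m
          have hbase : (0:ℝ) ≤ β * (4/m) := by positivity
          have hfact : (0:ℝ) < ((M+1).factorial : ℝ) := by
            exact_mod_cast (M+1).factorial_pos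
          calc (m.choose (M+1) : ℝ) * (β * (4/m)) ^ (M+1)
              ≤ ((m:ℝ)^(M+1) / (M+1).factorial) * (β * (4/m)) ^ (M+1) :=
                mul_le_mul_of_nonneg_right hchoose (by positivity)
            _ = (4*β)^(M+1) / (M+1).factorial := by
                rw [mul_pow, div_pow]
                field_simp
                ring
            _ = ((4*β*Real.exp 1)^(M+1) / (M+1).factorial) * Real.exp (-((M:ℝ)+1)) := by
                have hexp : Real.exp (-((M:ℝ)+1)) = (Real.exp (-1))^(M+1) := by
                  rw [← Real.exp_nat_mul]
                  congr 1
                  push_cast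
                  ring
                have hbase' : 4*β = 4*β*Real.exp 1 * Real.exp (-1) := by
                  rw [mul_assoc, ← Real.exp_add]
                  norm_num
                rw [hexp, div_mul_eq_mul_div, ← mul_pow, ← hbase']
            _ ≤ 1 * Real.exp (-((M:ℝ)+1)) := by
                apply mul_le_mul_of_nonneg_right (hM₀ (M+1) hK) (Real.exp_nonneg _)
            _ ≤ Real.exp (-(1 * (M:ℝ))) := by
                rw [one_mul]
                apply Real.exp_le_exp.2
                linarith
  -- conclude
  have hsplit : (1:ℝ≥0∞) ≤ μ {ω | xiDeg L m i ω ≤ M} + μ {ω | M < xiDeg L m i ω} := by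
    rw [← measure_univ (μ := μ)]
    refine le_trans (measure_mono ?_) (measure_union_le _ _)
    intro ω _
    rcases le_or_gt (xiDeg L m i ω) M with h | h
    · exact Or.inl h
    · exact Or.inr h
  have h1 : 1 - μ {ω | M < xiDeg L m i ω} ≤ μ {ω | xiDeg L m i ω ≤ M} := by
    rw [tsub_le_iff_right]
    exact hsplit
  exact le_trans (tsub_le_tsub_left htail 1) h1
end
end
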